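/- Let N ≥ 1, X a real normed space, C ⊆ X a convex subset, T_1,…,T_N : C → C nonexpansive mappings extended cyclically by T_n := T_{((n−1) mod N)+1}, (λ_n)_{n≥1} a sequence in [0,1], u ∈ C, and let (x_n) be the iteration x_0 = u, x_{n+1} = T_{n+1}(λ_{n+1}·u + (1 − λ_{n+1})·x_n). Let M > 0 with ‖x_n − u‖ ≤ M for all n ≥ 1. Assume θ : ℤ₊ → ℤ₊ is a rate of divergence for ∑_{n≥1} λ_n, γ : (0,∞) → ℤ₊ is a Cauchy modulus for ∑_{n≥1} |λ_{n+N} − λ_n|, and α : (0,∞) → ℤ₊ satisfies λ_{n+1} ≤ ε for all ε > 0 and all n ≥ α(ε). Then ‖x_n − T_{n+N}T_{n+N−1}⋯T_{n+1}x_n‖ → 0 with rate of convergence Φ(ε) = max{Φ̃(ε/2), α(ε/(4MN))}, where Φ̃(ε) = θ(γ(ε/(4M)) + max{⌈ln(4M/ε)⌉, 1}); i.e. ‖x_n − T_{n+N}⋯T_{n+1}x_n‖ ≤ ε for all ε > 0 and all n ≥ Φ(ε). -/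

import Mathlib

/-!
Write `b n = ‖x (n + N) - x n‖`. Because `T (n + N) = T n`, nonexpansiveness gives Xu's recurrence
`b (n + 1) ≤ (1 - λ (n + 1)) b n + M |λ (n + 1 + N) - λ (n + 1)|`. Unrolled from `K = γ δ`,
`δ = ε / 4M`, it bounds `b n` by `2M exp (-∑_{K < i ≤ n} λ i) + M ∑_{K < i ≤ n} |λ (i + N) - λ i|`:
the Cauchy modulus makes the second sum at most `δ`, and for `n ≥ θ (K + L)` with `L ≥ log (1 / δ)`
the rate of divergence gives `∑_{K < i ≤ n} λ i ≥ L`. Separately, once `λ (n + 1) ≤ ε / 4MN`,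
each of the `N` steps from `x n` to `x (n + N)` drifts at most `M ε / 4MN` further from
`T_{n+N} ⋯ T_{n+1} (x n)`; together with the first bound for `ε / 2` this gives the rate.
-/

/-- `iterComp T n N z` is the composition `T (n+N) (T (n+N-1) (⋯ (T (n+1) z)))`. -/
def iterComp {Y : Type*} (T : ℕ → Y → Y) (n : ℕ) : ℕ → Y → Y
  | 0, z => z
  | (k + 1), z => T (n + k + 1) (iterComp T n k z)

open Finset

section Cyclic

variable {Y : Type*} {T : ℕ → Y} {N : ℕ}

theorem forall_of_cyclic (hN : 1 ≤ N) (hcyc : ∀ n, 1 ≤ n → T n = T ((n - 1) % N + 1))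
    {P : Y → Prop} (hP : ∀ i, 1 ≤ i → i ≤ N → P (T i)) (n : ℕ) (hn : 1 ≤ n) : P (T n) := by
  rw [hcyc n hn]
  exact hP _ (Nat.le_add_left 1 _) (Nat.mod_lt _ hN)

theorem cyclic_add_period (hcyc : ∀ n, 1 ≤ n → T n = T ((n - 1) % N + 1)) (n : ℕ) (hn : 1 ≤ n) :
    T (n + N) = T n := by
  rw [hcyc (n + N) (by omega), hcyc n hn, Nat.sub_add_comm hn, Nat.add_mod_right]

end Cyclic

theorem iterComp_mem {Y : Type*} {T : ℕ → Y → Y} {C : Set Y}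
    (hT : ∀ n, 1 ≤ n → Set.MapsTo (T n) C C) (n : ℕ) {z : Y} (hz : z ∈ C) :
    ∀ k, iterComp T n k z ∈ C
  | 0 => hz
  | k + 1 => hT (n + k + 1) (Nat.le_add_left 1 _) (iterComp_mem hT n hz k)

section ConvexCombination

variable {X : Type*} [NormedAddCommGroup X] [NormedSpace ℝ X]

theorem Convex.smul_add_one_sub_smul_mem {C : Set X} (hC : Convex ℝ C) {u y : X} (hu : u ∈ C)
    (hy : y ∈ C) {t : ℝ} (ht : t ∈ Set.Icc 0 1) : t • u + (1 - t) • y ∈ C :=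
  hC hu hy ht.1 (sub_nonneg.2 ht.2) (add_sub_cancel _ _)

theorem norm_combo_sub_combo_le {s t : ℝ} (ht : t ≤ 1) (u y z : X) :
    ‖(s • u + (1 - s) • y) - (t • u + (1 - t) • z)‖ ≤ (1 - t) * ‖y - z‖ + |s - t| * ‖u - y‖ := by
  have h : (s • u + (1 - s) • y) - (t • u + (1 - t) • z)
      = (1 - t) • (y - z) + (s - t) • (u - y) := by
    module
  rw [h]
  refine (norm_add_le _ _).trans_eq ?_
  rw [norm_smul, norm_smul, Real.norm_of_nonneg (sub_nonneg.2 ht), Real.norm_eq_abs]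

theorem norm_combo_sub_le {t : ℝ} (ht : 0 ≤ t) (u y z : X) :
    ‖(t • u + (1 - t) • y) - z‖ ≤ ‖y - z‖ + t * ‖u - y‖ := by
  have h : (t • u + (1 - t) • y) - z = (y - z) + t • (u - y) := by module
  rw [h]
  refine (norm_add_le _ _).trans_eq ?_
  rw [norm_smul, Real.norm_of_nonneg ht]

end ConvexCombination

section XuRecurrence

variable {a t c : ℕ → ℝ}

theorem le_prod_mul_add_sum_of_le_one_sub_mul_add {K : ℕ} (ht : ∀ i, K < i → t i ∈ Set.Icc 0 1)
    (hc : ∀ i, K < i → 0 ≤ c i) (hrec : ∀ m, K ≤ m → a (m + 1) ≤ (1 - t (m + 1)) * a m + c (m + 1))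
    {n : ℕ} (hn : K ≤ n) :
    a n ≤ (∏ i ∈ Ioc K n, (1 - t i)) * a K + ∑ i ∈ Ioc K n, c i := by
  induction n, hn using Nat.le_induction with
  | base => simp
  | succ m hm ih =>
    rw [prod_Ioc_succ_top hm, sum_Ioc_succ_top hm]
    obtain ⟨ht0, ht1⟩ := ht (m + 1) (by omega)
    have hS : 0 ≤ ∑ i ∈ Ioc K m, c i := sum_nonneg fun i hi => hc i (mem_Ioc.1 hi).1
    calc a (m + 1) ≤ (1 - t (m + 1)) * a m + c (m + 1) := hrec m hm
      _ ≤ (1 - t (m + 1)) * ((∏ i ∈ Ioc K m, (1 - t i)) * a K + ∑ i ∈ Ioc K m, c i)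
          + c (m + 1) := by gcongr
      _ ≤ _ := by nlinarith [mul_nonneg ht0 hS]

theorem prod_one_sub_le_exp_neg_sum {ι : Type*} (s : Finset ι) {f : ι → ℝ}
    (hf : ∀ i ∈ s, f i ≤ 1) : ∏ i ∈ s, (1 - f i) ≤ Real.exp (-∑ i ∈ s, f i) := by
  rw [← sum_neg_distrib, Real.exp_sum]
  exact prod_le_prod (fun i hi => sub_nonneg.2 (hf i hi))
    fun i _ => by linarith [Real.add_one_le_exp (-f i)]

theorem sum_Icc_one_le_of_le_one (ht : ∀ i, 1 ≤ i → t i ≤ 1) (n : ℕ) :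
    ∑ i ∈ Icc 1 n, t i ≤ n := by
  calc ∑ i ∈ Icc 1 n, t i ≤ ∑ _i ∈ Icc 1 n, (1 : ℝ) := sum_le_sum fun i hi => ht i (mem_Icc.1 hi).1
    _ = n := by simp

theorem sum_Icc_one_add_sum_Ioc (t : ℕ → ℝ) {K n : ℕ} (hKn : K ≤ n) :
    ∑ i ∈ Icc 1 K, t i + ∑ i ∈ Ioc K n, t i = ∑ i ∈ Icc 1 n, t i := by
  have h : ∀ m, Icc 1 m = Ioc 0 m := Icc_add_one_left_eq_Ioc 0
  rw [h, h]
  exact sum_Ioc_consecutive t (Nat.zero_le K) hKn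

theorem le_mul_exp_neg_add_sum_of_rate_of_divergence {A : ℝ} (ha0 : ∀ m, 0 ≤ a m)
    (haA : ∀ m, a m ≤ A) (ht : ∀ i, 1 ≤ i → t i ∈ Set.Icc 0 1) (hc : ∀ i, 1 ≤ i → 0 ≤ c i)
    (hrec : ∀ m, a (m + 1) ≤ (1 - t (m + 1)) * a m + c (m + 1))
    {θ : ℕ → ℕ} (hθ : ∀ m : ℕ, 1 ≤ m → (m : ℝ) ≤ ∑ i ∈ Icc 1 (θ m), t i)
    {K L n : ℕ} (hL : 1 ≤ L) (hn : θ (K + L) ≤ n) :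
    a n ≤ A * Real.exp (-L) + ∑ i ∈ Ioc K n, c i := by
  have hKL : ((K + L : ℕ) : ℝ) ≤ ∑ i ∈ Icc 1 n, t i :=
    (hθ _ (by omega)).trans <| sum_le_sum_of_subset_of_nonneg (Icc_subset_Icc_right hn)
      fun i hi _ => (ht i (mem_Icc.1 hi).1).1
  have hKn : K ≤ n := by
    have : K + L ≤ n := by
      exact_mod_cast hKL.trans (sum_Icc_one_le_of_le_one (fun i hi => (ht i hi).2) n)
    omega
  have hsum : (L : ℝ) ≤ ∑ i ∈ Ioc K n, t i := by
    rw [← sum_Icc_one_add_sum_Ioc t hKn] at hKL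
    push_cast at hKL
    linarith [sum_Icc_one_le_of_le_one (fun i hi => (ht i hi).2) K]
  have hP := prod_one_sub_le_exp_neg_sum (Ioc K n) (f := t)
    fun i hi => (ht i (by have := (mem_Ioc.1 hi).1; omega)).2
  calc a n ≤ (∏ i ∈ Ioc K n, (1 - t i)) * a K + ∑ i ∈ Ioc K n, c i :=
        le_prod_mul_add_sum_of_le_one_sub_mul_add (fun i hi => ht i (by omega))
          (fun i hi => hc i (by omega)) (fun m _ => hrec m) hKn
    _ ≤ Real.exp (-L) * A + ∑ i ∈ Ioc K n, c i := by
        gcongr ?_ + _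
        exact mul_le_mul (hP.trans (Real.exp_le_exp.2 (neg_le_neg hsum))) (haA K) (ha0 K)
          (Real.exp_pos _).le
    _ = A * Real.exp (-L) + ∑ i ∈ Ioc K n, c i := by ring

theorem sum_Ioc_le_of_cauchy_modulus {K : ℕ} {ε : ℝ} (hε : 0 ≤ ε)
    (hK : ∀ m, 1 ≤ m → ∑ i ∈ Icc (K + 1) (K + m), c i ≤ ε) (n : ℕ) :
    ∑ i ∈ Ioc K n, c i ≤ ε := by
  rcases le_or_gt n K with h | h
  · simpa [Ioc_eq_empty_of_le h] using hε
  · have := hK (n - K) (by omega)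
    rwa [Nat.add_sub_cancel' h.le, Icc_add_one_left_eq_Ioc] at this

end XuRecurrence

section CyclicHalpern

variable {X : Type*} [NormedAddCommGroup X] [NormedSpace ℝ X] {C : Set X} {T : ℕ → X → X}
  {N : ℕ} {lam : ℕ → ℝ} {u : X} {x : ℕ → X} {M : ℝ}

def NonexpansiveOn (f : X → X) (C : Set X) : Prop :=
  ∀ y ∈ C, ∀ z ∈ C, ‖f y - f z‖ ≤ ‖y - z‖

theorem halpern_mem (hC : Convex ℝ C) (hT : ∀ n, 1 ≤ n → Set.MapsTo (T n) C C)
    (hlam : ∀ n, 1 ≤ n → lam n ∈ Set.Icc (0 : ℝ) 1) (hu : u ∈ C) (hx0 : x 0 = u)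
    (hx : ∀ n : ℕ, x (n + 1) = T (n + 1) (lam (n + 1) • u + (1 - lam (n + 1)) • x n)) (n : ℕ) :
    x n ∈ C := by
  induction n with
  | zero => exact hx0 ▸ hu
  | succ n ih =>
    rw [hx n]
    exact hT _ (Nat.le_add_left 1 n)
      (hC.smul_add_one_sub_smul_mem hu ih (hlam _ (Nat.le_add_left 1 n)))

theorem halpern_norm_sub_period_succ_le (hper : ∀ n, 1 ≤ n → T (n + N) = T n)
    (hT : ∀ n, 1 ≤ n → NonexpansiveOn (T n) C) (hC : Convex ℝ C)
    (hlam : ∀ n, 1 ≤ n → lam n ∈ Set.Icc (0 : ℝ) 1) (hu : u ∈ C) (hxC : ∀ n, x n ∈ C)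
    (hx : ∀ n : ℕ, x (n + 1) = T (n + 1) (lam (n + 1) • u + (1 - lam (n + 1)) • x n))
    (hxu : ∀ n, ‖x n - u‖ ≤ M) (n : ℕ) :
    ‖x (n + 1 + N) - x (n + 1)‖ ≤
      (1 - lam (n + 1)) * ‖x (n + N) - x n‖ + |lam (n + 1 + N) - lam (n + 1)| * M := by
  have hx' : x (n + 1 + N) =
      T (n + 1) (lam (n + 1 + N) • u + (1 - lam (n + 1 + N)) • x (n + N)) := by
    rw [← hper (n + 1) (Nat.le_add_left 1 n), Nat.add_right_comm, hx]
  have hmem : ∀ m, 1 ≤ m → ∀ k, lam m • u + (1 - lam m) • x k ∈ C := fun m hm k =>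
    hC.smul_add_one_sub_smul_mem hu (hxC k) (hlam m hm)
  rw [hx', hx n]
  calc _ ≤ ‖(lam (n + 1 + N) • u + (1 - lam (n + 1 + N)) • x (n + N))
          - (lam (n + 1) • u + (1 - lam (n + 1)) • x n)‖ :=
        hT (n + 1) (Nat.le_add_left 1 n) _ (hmem (n + 1 + N) (by omega) _) _
          (hmem (n + 1) (by omega) _)
    _ ≤ (1 - lam (n + 1)) * ‖x (n + N) - x n‖
          + |lam (n + 1 + N) - lam (n + 1)| * ‖u - x (n + N)‖ :=
        norm_combo_sub_combo_le (hlam (n + 1) (Nat.le_add_left 1 n)).2 _ _ _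
    _ ≤ _ := by
        gcongr
        rw [norm_sub_rev]
        exact hxu _

theorem halpern_norm_sub_iterComp_le {δ : ℝ} (hTmap : ∀ n, 1 ≤ n → Set.MapsTo (T n) C C)
    (hT : ∀ n, 1 ≤ n → NonexpansiveOn (T n) C) (hC : Convex ℝ C)
    (hlam : ∀ n, 1 ≤ n → lam n ∈ Set.Icc (0 : ℝ) 1) (hu : u ∈ C) (hxC : ∀ n, x n ∈ C)
    (hx : ∀ n : ℕ, x (n + 1) = T (n + 1) (lam (n + 1) • u + (1 - lam (n + 1)) • x n))
    (hxu : ∀ n, ‖x n - u‖ ≤ M) (n : ℕ) {k : ℕ} (hδ : ∀ j < k, lam (n + j + 1) ≤ δ) :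
    ‖x (n + k) - iterComp T n k (x n)‖ ≤ k * (δ * M) := by
  induction k with
  | zero => simp [iterComp]
  | succ k ih =>
    have hl := hlam (n + k + 1) (Nat.le_add_left 1 _)
    calc ‖x (n + k + 1) - T (n + k + 1) (iterComp T n k (x n))‖
        ≤ ‖(lam (n + k + 1) • u + (1 - lam (n + k + 1)) • x (n + k)) - iterComp T n k (x n)‖ := by
          rw [hx]
          exact hT _ (Nat.le_add_left 1 _) _ (hC.smul_add_one_sub_smul_mem hu (hxC _) hl) _
            (iterComp_mem hTmap n (hxC n) k)
      _ ≤ ‖x (n + k) - iterComp T n k (x n)‖ + lam (n + k + 1) * ‖u - x (n + k)‖ :=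
          norm_combo_sub_le hl.1 _ _ _
      _ ≤ k * (δ * M) + δ * M := by
          refine add_le_add (ih fun j hj => hδ j (by omega)) (mul_le_mul (hδ k k.lt_succ_self) ?_
            (norm_nonneg _) (hl.1.trans (hδ k k.lt_succ_self)))
          rw [norm_sub_rev]
          exact hxu _
      _ = (k + 1 : ℕ) * (δ * M) := by push_cast; ring

theorem halpern_norm_sub_period_le (hper : ∀ n, 1 ≤ n → T (n + N) = T n)
    (hT : ∀ n, 1 ≤ n → NonexpansiveOn (T n) C) (hC : Convex ℝ C)
    (hlam : ∀ n, 1 ≤ n → lam n ∈ Set.Icc (0 : ℝ) 1) (hu : u ∈ C) (hxC : ∀ n, x n ∈ C)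
    (hx : ∀ n : ℕ, x (n + 1) = T (n + 1) (lam (n + 1) • u + (1 - lam (n + 1)) • x n))
    (hM : 0 < M) (hxu : ∀ n, ‖x n - u‖ ≤ M)
    {θ : ℕ → ℕ} (hθ : ∀ m : ℕ, 1 ≤ m → (m : ℝ) ≤ ∑ n ∈ Icc 1 (θ m), lam n)
    {γ : ℝ → ℕ} (hγ : ∀ ε : ℝ, 0 < ε → ∀ m, 1 ≤ m →
      ∑ n ∈ Icc (γ ε + 1) (γ ε + m), |lam (n + N) - lam n| ≤ ε)
    {ε : ℝ} (hε : 0 < ε) {n : ℕ}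
    (hn : θ (γ (ε / (4 * M)) + max ⌈Real.log (4 * M / ε)⌉₊ 1) ≤ n) :
    ‖x (n + N) - x n‖ ≤ ε := by
  set δ := ε / (4 * M) with hδ
  set L := max ⌈Real.log (4 * M / ε)⌉₊ 1
  have hb : ∀ m, ‖x (m + N) - x m‖ ≤ 2 * M := fun m =>
    (norm_sub_le_norm_sub_add_norm_sub _ u _).trans
      (by rw [norm_sub_rev u]; linarith [hxu (m + N), hxu m])
  have hunrolled := le_mul_exp_neg_add_sum_of_rate_of_divergence (fun m => norm_nonneg _) hb hlam
    (c := fun i => |lam (i + N) - lam i| * M) (fun i _ => by positivity)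
    (halpern_norm_sub_period_succ_le hper hT hC hlam hu hxC hx hxu) hθ (le_max_right _ _) hn
  have hexp : Real.exp (-L) ≤ δ := by
    have hlog : Real.log (4 * M / ε) ≤ L :=
      (Nat.le_ceil _).trans (by exact_mod_cast le_max_left _ _)
    calc Real.exp (-L) ≤ Real.exp (-Real.log (4 * M / ε)) := Real.exp_le_exp.2 (neg_le_neg hlog)
      _ = δ := by rw [Real.exp_neg, Real.exp_log (by positivity), inv_div]
  have hsum : ∑ i ∈ Ioc (γ δ) n, |lam (i + N) - lam i| * M ≤ δ * M := by
    rw [← sum_mul]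
    gcongr
    exact sum_Ioc_le_of_cauchy_modulus (by positivity) (hγ δ (by positivity)) n
  calc ‖x (n + N) - x n‖ ≤ 2 * M * Real.exp (-L) + ∑ i ∈ Ioc (γ δ) n, |lam (i + N) - lam i| * M :=
        hunrolled
    _ ≤ 2 * M * δ + δ * M := by gcongr
    _ ≤ ε := by rw [hδ]; field_simp; linarith

end CyclicHalpern

/-- Rate of asymptotic regularity `‖x n - T_{n+N}⋯T_{n+1} (x n)‖ → 0` for the cyclic
iteration `x 0 = u`, `x (n+1) = T_{n+1} (λ_{n+1} • u + (1 - λ_{n+1}) • x n)`. -/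
theorem stmt_4 {X : Type*} [NormedAddCommGroup X] [NormedSpace ℝ X]
    (N : ℕ) (hN : 1 ≤ N) (C : Set X) (hC : Convex ℝ C)
    (T : ℕ → X → X)
    (hTmap : ∀ i, 1 ≤ i → i ≤ N → Set.MapsTo (T i) C C)
    (hTne : ∀ i, 1 ≤ i → i ≤ N → ∀ x ∈ C, ∀ y ∈ C, ‖T i x - T i y‖ ≤ ‖x - y‖)
    (hcyc : ∀ n, 1 ≤ n → T n = T ((n - 1) % N + 1))
    (lam : ℕ → ℝ) (hlam : ∀ n, 1 ≤ n → lam n ∈ Set.Icc (0 : ℝ) 1)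
    (u : X) (hu : u ∈ C) (x : ℕ → X) (hx0 : x 0 = u)
    (hx : ∀ n : ℕ, x (n + 1) = T (n + 1) (lam (n + 1) • u + (1 - lam (n + 1)) • x n))
    (M : ℝ) (hM : 0 < M)
    (hxb : ∀ n, 1 ≤ n → ‖x n - u‖ ≤ M)
    (θ : ℕ → ℕ)
    (hθ : ∀ m : ℕ, 1 ≤ m → (m : ℝ) ≤ ∑ n ∈ Finset.Icc 1 (θ m), lam n)
    (γ : ℝ → ℕ)
    (hγ : ∀ ε : ℝ, 0 < ε → ∀ m, 1 ≤ m →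
      ∑ n ∈ Finset.Icc (γ ε + 1) (γ ε + m), |lam (n + N) - lam n| ≤ ε)
    (α : ℝ → ℕ)
    (hα : ∀ ε : ℝ, 0 < ε → ∀ n : ℕ, α ε ≤ n → lam (n + 1) ≤ ε) :
    ∀ ε : ℝ, 0 < ε → ∀ n : ℕ,
      max (θ (γ (ε / 2 / (4 * M)) + max ⌈Real.log (4 * M / (ε / 2))⌉₊ 1))
        (α (ε / (4 * M * N))) ≤ n →
      ‖x n - iterComp T n N (x n)‖ ≤ ε := by
  intro ε hε n hn
  have hTmap' := forall_of_cyclic (P := fun f => Set.MapsTo f C C) hN hcyc hTmap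
  have hTne' := forall_of_cyclic (P := (NonexpansiveOn · C)) hN hcyc hTne
  have hxC := halpern_mem hC hTmap' hlam hu hx0 hx
  have hxu : ∀ m, ‖x m - u‖ ≤ M
    | 0 => by simpa [hx0] using hM.le
    | m + 1 => hxb (m + 1) (Nat.le_add_left 1 m)
  have hperiod : ‖x (n + N) - x n‖ ≤ ε / 2 :=
    halpern_norm_sub_period_le (cyclic_add_period hcyc) hTne' hC hlam hu hxC hx hM hxu hθ hγ
      (half_pos hε) (le_of_max_le_left hn)
  have hNpos : (0 : ℝ) < N := by exact_mod_cast hN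
  have hcomp : ‖x (n + N) - iterComp T n N (x n)‖ ≤ N * (ε / (4 * M * N) * M) :=
    halpern_norm_sub_iterComp_le hTmap' hTne' hC hlam hu hxC hx hxu n fun j _ =>
      hα _ (by positivity) (n + j) ((le_of_max_le_right hn).trans (Nat.le_add_right n j))
  have hdrift : (N : ℝ) * (ε / (4 * M * N) * M) = ε / 4 := by field_simp
  calc ‖x n - iterComp T n N (x n)‖
      ≤ ‖x n - x (n + N)‖ + ‖x (n + N) - iterComp T n N (x n)‖ :=
        norm_sub_le_norm_sub_add_norm_sub _ _ _
    _ ≤ ε := by rw [norm_sub_rev]; linarith
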